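/- Let τ be a type and M a submonoid of Hyp(τ). For any equational theory Σ of type τ the following conditions are equivalent: (i) Σ = H_M Id H_M Mod Σ; (ii) χ_M^E[Σ] = Σ; (iii) Mod Σ = H_M Mod Σ; (iv) χ_M^A[Mod Σ] = Mod Σ. -/

import Mathlib

/-!
Common framework: terms of a fixed type `τ = (ar i)_{i : I}`, algebras,
identities, hypersubstitutions, multi-hypersubstitutions and colorations,
following Denecke–Koppitz–Shtrakov, "Multi-hypersubstitutions and colored
solid varieties".
-/

namespace ColoredSolid

/-- Terms of type `τ` (arities `ar`) over the countably infinite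
variable set `X = {x₀, x₁, …}` (variables indexed by `ℕ`). -/
inductive Term (I : Type) (ar : I → ℕ) : Type
  | var : ℕ → Term I ar
  | app : (i : I) → (Fin (ar i) → Term I ar) → Term I ar

variable {I : Type} {ar : I → ℕ}

/-- The set of (indices of) variables occurring in a term. -/
def Term.varSet : Term I ar → Set ℕ
  | .var n => {n}
  | .app _ ts => ⋃ k, (ts k).varSet

/-- Simultaneous substitution of terms for variables. -/
def subst (θ : ℕ → Term I ar) : Term I ar → Term I ar
  | .var n => θ n
  | .app i ts => .app i fun k => subst θ (ts k)

/-- Pad a `Fin (ar i)`-indexed family of terms to a total substitution. -/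
def pad {i : I} (g : Fin (ar i) → Term I ar) : ℕ → Term I ar :=
  fun j => if h : j < ar i then g ⟨j, h⟩ else .var j

/-- The extension `σ̂` of a hypersubstitution to all terms. -/
def hat (σ : (i : I) → Term I ar) : Term I ar → Term I ar
  | .var n => .var n
  | .app i ts => subst (pad fun k => hat σ (ts k)) (σ i)

/-- A hypersubstitution is proper when each `σ(fᵢ)` is an `nᵢ`-ary term,
i.e. uses only the variables `x₀, …, x_{nᵢ-1}`. -/
def Proper (σ : (i : I) → Term I ar) : Prop :=
  ∀ i, ∀ n ∈ (σ i).varSet, n < ar i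

/-- `Hyp I ar` : the hypersubstitutions of type `τ`. -/
def Hyp (I : Type) (ar : I → ℕ) : Type := {σ : (i : I) → Term I ar // Proper σ}

/-- The identity hypersubstitution (as a raw function). -/
def hypIdFun : (i : I) → Term I ar := fun i => .app i fun k => .var k.val

lemma proper_hypIdFun : Proper (hypIdFun (I := I) (ar := ar)) := by
  intro i n hn
  simp only [hypIdFun, Term.varSet, Set.mem_iUnion, Set.mem_singleton_iff] at hn
  obtain ⟨k, rfl⟩ := hn
  exact k.isLt

/-- The identity hypersubstitution `σ_id`. -/
def hypId : Hyp I ar := ⟨hypIdFun, proper_hypIdFun⟩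

lemma varSet_subst (θ : ℕ → Term I ar) (t : Term I ar) :
    (subst θ t).varSet ⊆ ⋃ n ∈ t.varSet, (θ n).varSet := by
  induction t with
  | var n => simp [subst, Term.varSet]
  | app i ts ih =>
    intro m hm
    simp only [subst, Term.varSet, Set.mem_iUnion] at hm
    obtain ⟨k, hk⟩ := hm
    have := ih k hk
    simp only [Set.mem_iUnion, Term.varSet] at this ⊢
    obtain ⟨n, hn1, hn2⟩ := this
    exact ⟨n, ⟨⟨k, hn1⟩, hn2⟩⟩

lemma varSet_hat {σ : (i : I) → Term I ar} (hσ : Proper σ) :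
    ∀ t : Term I ar, (hat σ t).varSet ⊆ t.varSet := by
  intro t
  induction t with
  | var n => simp [hat]
  | app i ts ih =>
    intro m hm
    rw [hat] at hm
    have hmem := varSet_subst _ _ hm
    simp only [Set.mem_iUnion] at hmem
    obtain ⟨n, hn, hm2⟩ := hmem
    have hlt := hσ i n hn
    simp only [pad, dif_pos hlt] at hm2
    have := ih ⟨n, hlt⟩ hm2
    simp only [Term.varSet, Set.mem_iUnion]
    exact ⟨⟨n, hlt⟩, this⟩

/-- Composition of hypersubstitutions (raw functions): `σ₁ ∘ₕ σ₂`. -/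
def hypCompFun (σ₁ σ₂ : (i : I) → Term I ar) : (i : I) → Term I ar := fun i => hat σ₁ (σ₂ i)

lemma proper_hypCompFun {σ₁ σ₂ : (i : I) → Term I ar} (h₁ : Proper σ₁) (h₂ : Proper σ₂) :
    Proper (hypCompFun σ₁ σ₂) :=
  fun i n hn => h₂ i n (varSet_hat h₁ (σ₂ i) hn)

/-- Composition of hypersubstitutions: `σ₁ ∘ₕ σ₂ := σ̂₁ ∘ σ₂`. -/
def hypComp (σ₁ σ₂ : Hyp I ar) : Hyp I ar :=
  ⟨hypCompFun σ₁.val σ₂.val, proper_hypCompFun σ₁.property σ₂.property⟩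

/-- `M` is a submonoid of the monoid `Hyp(τ)` of all hypersubstitutions. -/
def IsSubmonoid (M : Set (Hyp I ar)) : Prop :=
  hypId ∈ M ∧ ∀ σ₁ ∈ M, ∀ σ₂ ∈ M, hypComp σ₁ σ₂ ∈ M

/-- An algebra of type `τ`: a (nonempty) carrier together with an
`nᵢ`-ary operation for every operation symbol `fᵢ`. -/
structure Alg (I : Type) (ar : I → ℕ) where
  carrier : Type
  nonempty : Nonempty carrier
  op : ∀ i, (Fin (ar i) → carrier) → carrier

/-- Evaluation of a term in an algebra under a valuation of the variables. -/
def Alg.eval (A : Alg I ar) (v : ℕ → A.carrier) : Term I ar → A.carrier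
  | .var n => v n
  | .app i ts => A.op i fun k => A.eval v (ts k)

/-- Identities `s ≈ t` are pairs of terms. -/
abbrev Eqn (I : Type) (ar : I → ℕ) := Term I ar × Term I ar

/-- The identity `e` holds in the algebra `A`. -/
def holds (A : Alg I ar) (e : Eqn I ar) : Prop :=
  ∀ v : ℕ → A.carrier, A.eval v e.1 = A.eval v e.2

/-- `Id K` : the identities holding in every algebra of the class `K`. -/
def IdS (K : Set (Alg I ar)) : Set (Eqn I ar) := {e | ∀ A ∈ K, holds A e}

/-- `Mod Σ` : the class of algebras satisfying every identity of `Σ`. -/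
def ModS (E : Set (Eqn I ar)) : Set (Alg I ar) := {A | ∀ e ∈ E, holds A e}

/-- `χ_M^E[Σ] = {σ̂[u] ≈ σ̂[v] | u ≈ v ∈ Σ, σ ∈ M}`. -/
def chiE (M : Set (Hyp I ar)) (E : Set (Eqn I ar)) : Set (Eqn I ar) :=
  {e | ∃ σ ∈ M, ∃ uv ∈ E, e = (hat σ.val uv.1, hat σ.val uv.2)}

/-- The derived algebra `σ(𝒜)` (same carrier, operations `σ(fᵢ)^𝒜`). -/
noncomputable def derive (σ : (i : I) → Term I ar) (A : Alg I ar) : Alg I ar where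
  carrier := A.carrier
  nonempty := A.nonempty
  op i args := A.eval
    (fun j => if h : j < ar i then args ⟨j, h⟩ else Classical.choice A.nonempty) (σ i)

/-- `χ_M^A[K] = {σ(𝒜) | 𝒜 ∈ K, σ ∈ M}`. -/
def chiA (M : Set (Hyp I ar)) (K : Set (Alg I ar)) : Set (Alg I ar) :=
  {B | ∃ σ ∈ M, ∃ A ∈ K, B = derive σ.val A}

/-- `H_M Id K` : the `M`-hyperidentities of the class `K`. -/
def HId (M : Set (Hyp I ar)) (K : Set (Alg I ar)) : Set (Eqn I ar) :=
  {e | ∀ σ ∈ M, (hat σ.val e.1, hat σ.val e.2) ∈ IdS K}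

/-- `H_M Mod Σ` : the algebras `M`-hypersatisfying every identity of `Σ`. -/
def HMod (M : Set (Hyp I ar)) (E : Set (Eqn I ar)) : Set (Alg I ar) :=
  {A | ∀ σ ∈ M, ∀ uv ∈ E, holds A (hat σ.val uv.1, hat σ.val uv.2)}

/-!  Colorations and multi-hypersubstitutions. -/

/-- `addresses t` : the set of addresses of occurrences of operation symbols
in the term `t` (an address is the list of argument positions leading from
the root to the occurrence). -/
def addresses : Term I ar → Set (List ℕ)
  | .var _ => ∅
  | .app i ts => insert [] (⋃ k : Fin (ar i), (fun l => k.val :: l) '' addresses (ts k))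

/-- A coloration `C` of `W_τ(X)` assigns to every term `t` a coloration
`α_t` of its addresses (only the values on `addresses t` matter). -/
def Coloration (I : Type) (ar : I → ℕ) : Type := Term I ar → List ℕ → ℕ

/-- A multi-hypersubstitution is a map `ρ : ℕ → Hyp(τ)`; here, its
underlying raw function is extended to the subterms of a term, tracking the
address of the current subterm, with colors given by `α`. -/
def mhatAux (ρ : ℕ → (i : I) → Term I ar) (α : List ℕ → ℕ) : List ℕ → Term I ar → Term I ar
  | _, .var n => .var n
  | a, .app i ts =>
      subst (pad fun k => mhatAux ρ α (a ++ [k.val]) (ts k)) (ρ (α a) i)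

/-- `ρ̂_C[t]` : application of the multi-hypersubstitution `ρ` to the term
`t`, colored by `C`. -/
def mhat (C : Coloration I ar) (ρ : ℕ → Hyp I ar) (t : Term I ar) : Term I ar :=
  mhatAux (fun n => (ρ n).val) (C t) [] t

/-- `χ_C^e[Σ] = {ρ̂_C[u] ≈ ρ̂_C[v] | u ≈ v ∈ Σ, ρ ∈ Hyp(τ)^ℕ}`. -/
def chiCe (C : Coloration I ar) (E : Set (Eqn I ar)) : Set (Eqn I ar) :=
  {e | ∃ ρ : ℕ → Hyp I ar, ∃ uv ∈ E, e = (mhat C ρ uv.1, mhat C ρ uv.2)}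

/-- The iterates `χ_C^{e,n}` of `χ_C^e` (with `χ_C^{e,0} = χ_C^e`). -/
def chiCiter (C : Coloration I ar) : ℕ → Set (Eqn I ar) → Set (Eqn I ar)
  | 0, E => chiCe C E
  | n + 1, E => chiCe C (chiCiter C n E)

/-- `χ_C^E[Σ] = ⋃ₙ χ_C^{e,n}[Σ]`. -/
def chiCE (C : Coloration I ar) (E : Set (Eqn I ar)) : Set (Eqn I ar) :=
  ⋃ n, chiCiter C n E

/-- The derived algebra `ρ[𝒜]`, with operations
`fᵢ^{ρ[𝒜]} := (ρ̂_C[fᵢ(x₁,…,x_{nᵢ})])^𝒜`. -/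
noncomputable def deriveC (C : Coloration I ar) (ρ : ℕ → Hyp I ar) (A : Alg I ar) :
    Alg I ar where
  carrier := A.carrier
  nonempty := A.nonempty
  op i args := A.eval
    (fun j => if h : j < ar i then args ⟨j, h⟩ else Classical.choice A.nonempty)
    (mhat C ρ (.app i fun k => .var k.val))

/-- `χ_C^A[K] = {ρ[𝒜] | 𝒜 ∈ K, ρ ∈ Hyp(τ)^ℕ}`. -/
def chiCA (C : Coloration I ar) (K : Set (Alg I ar)) : Set (Alg I ar) :=
  {B | ∃ ρ : ℕ → Hyp I ar, ∃ A ∈ K, B = deriveC C ρ A}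

/-- `CMod Σ = {𝒜 | χ_C^E[Σ] ⊆ Id 𝒜}`. -/
def CMod (C : Coloration I ar) (E : Set (Eqn I ar)) : Set (Alg I ar) :=
  {A | chiCE C E ⊆ {e | holds A e}}

/-- `CId K = {s ≈ t | χ_C^E[{s ≈ t}] ⊆ Id K}`. -/
def CId (C : Coloration I ar) (K : Set (Alg I ar)) : Set (Eqn I ar) :=
  {e | chiCE C {e} ⊆ IdS K}

variable {I : Type} {ar : I → ℕ}


/-!
Two facts carry the argument: `σ ↦ σ̂` turns `∘ₕ` into composition of term maps, and a term
evaluates in the derived algebra `σ(𝒜)` as `σ̂[t]` does in `𝒜`. Closure of `M` under `∘ₕ` then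
makes `H_M Id K` closed under `χ_M^E`, and `σ_id ∈ M` gives the inclusions `Σ ⊆ χ_M^E[Σ]`,
`H_M Mod Σ ⊆ Mod Σ`, `K ⊆ χ_M^A[K]`; conditions (iii) and (iv) both say `Mod Σ ⊆ H_M Mod Σ`.
-/

lemma subst_congr {θ₁ θ₂ : ℕ → Term I ar} (t : Term I ar)
    (h : ∀ n ∈ t.varSet, θ₁ n = θ₂ n) : subst θ₁ t = subst θ₂ t := by
  induction t with
  | var n => exact h n rfl
  | app i ts ih =>
    simp only [subst]
    congr 1
    funext k
    exact ih k fun n hn => h n (Set.mem_iUnion.2 ⟨k, hn⟩)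

lemma Alg.eval_congr (A : Alg I ar) {v₁ v₂ : ℕ → A.carrier} (t : Term I ar)
    (h : ∀ n ∈ t.varSet, v₁ n = v₂ n) : A.eval v₁ t = A.eval v₂ t := by
  induction t with
  | var n => exact h n rfl
  | app i ts ih =>
    simp only [Alg.eval]
    congr 1
    funext k
    exact ih k fun n hn => h n (Set.mem_iUnion.2 ⟨k, hn⟩)

lemma subst_subst (θ η : ℕ → Term I ar) (t : Term I ar) :
    subst θ (subst η t) = subst (fun n => subst θ (η n)) t := by
  induction t with
  | var n => rfl
  | app i ts ih => simp only [subst, ih]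

lemma Alg.eval_subst (A : Alg I ar) (v : ℕ → A.carrier) (θ : ℕ → Term I ar) (t : Term I ar) :
    A.eval v (subst θ t) = A.eval (fun n => A.eval v (θ n)) t := by
  induction t with
  | var n => rfl
  | app i ts ih => simp only [subst, Alg.eval, ih]

lemma hat_hypIdFun (t : Term I ar) : hat hypIdFun t = t := by
  induction t with
  | var n => rfl
  | app i ts ih =>
    simp only [hat, hypIdFun, subst]
    congr 1
    funext k
    simp [pad, ih k]

lemma hat_subst {σ : (i : I) → Term I ar} (hσ : Proper σ) (θ : ℕ → Term I ar)
    (t : Term I ar) : hat σ (subst θ t) = subst (fun n => hat σ (θ n)) (hat σ t) := by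
  induction t with
  | var n => rfl
  | app i ts ih =>
    simp only [subst, hat, subst_subst]
    refine subst_congr _ fun n hn => ?_
    simp [pad, hσ i n hn, ih]

lemma hat_hypCompFun {σ₁ σ₂ : (i : I) → Term I ar} (h₁ : Proper σ₁) (h₂ : Proper σ₂)
    (t : Term I ar) : hat (hypCompFun σ₁ σ₂) t = hat σ₁ (hat σ₂ t) := by
  induction t with
  | var n => rfl
  | app i ts ih =>
    rw [hat, hat, hat_subst h₁, hypCompFun]
    refine subst_congr _ fun n hn => ?_
    simp [pad, h₂ i n (varSet_hat h₁ _ hn), ih]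

lemma eval_derive {σ : (i : I) → Term I ar} (hσ : Proper σ) (A : Alg I ar)
    (v : ℕ → A.carrier) (t : Term I ar) :
    (derive σ A).eval v t = A.eval v (hat σ t) := by
  induction t with
  | var n => rfl
  | app i ts ih =>
    change A.eval _ (σ i) = _
    rw [hat, Alg.eval_subst]
    refine A.eval_congr _ fun n hn => ?_
    simp [pad, hσ i n hn, ih]

lemma holds_derive_iff {σ : (i : I) → Term I ar} (hσ : Proper σ) (A : Alg I ar)
    (e : Eqn I ar) : holds (derive σ A) e ↔ holds A (hat σ e.1, hat σ e.2) := by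
  exact forall_congr' fun v => by rw [← eval_derive hσ A v, ← eval_derive hσ A v]; rfl

lemma derive_hypIdFun (A : Alg I ar) : derive hypIdFun A = A := by
  obtain ⟨carrier, nonempty, op⟩ := A
  simp only [derive, hypIdFun, Alg.eval, Fin.is_lt, dite_true]

section HyperOperators

variable {M : Set (Hyp I ar)}

lemma ModS_anti {E F : Set (Eqn I ar)} (h : E ⊆ F) : ModS F ⊆ ModS E :=
  fun _ hA e he => hA e (h he)

lemma HMod_eq_ModS_chiE (M : Set (Hyp I ar)) (E : Set (Eqn I ar)) :
    HMod M E = ModS (chiE M E) := by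
  ext A
  constructor
  · rintro hA _ ⟨σ, hσ, uv, huv, rfl⟩
    exact hA σ hσ uv huv
  · exact fun hA σ hσ uv huv => hA _ ⟨σ, hσ, uv, huv, rfl⟩

lemma subset_HId_HMod (M : Set (Hyp I ar)) (E : Set (Eqn I ar)) : E ⊆ HId M (HMod M E) :=
  fun e he σ hσ _ hA => hA σ hσ e he

lemma chiA_subset_ModS_iff {K : Set (Alg I ar)} {E : Set (Eqn I ar)} :
    chiA M K ⊆ ModS E ↔ K ⊆ HMod M E := by
  constructor
  · exact fun h A hA σ hσ uv huv => (holds_derive_iff σ.2 A uv).1 (h ⟨σ, hσ, A, hA, rfl⟩ uv huv)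
  · rintro h _ ⟨σ, hσ, A, hA, rfl⟩ uv huv
    exact (holds_derive_iff σ.2 A uv).2 (h hA σ hσ uv huv)

lemma chiE_HId_subset (hM : ∀ σ₁ ∈ M, ∀ σ₂ ∈ M, hypComp σ₁ σ₂ ∈ M) (K : Set (Alg I ar)) :
    chiE M (HId M K) ⊆ HId M K := by
  rintro _ ⟨σ, hσ, e, he, rfl⟩ σ' hσ'
  simpa only [hypComp, hat_hypCompFun σ'.2 σ.2] using he _ (hM σ' hσ' σ hσ)

lemma subset_chiE (hM : hypId ∈ M) (E : Set (Eqn I ar)) : E ⊆ chiE M E :=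
  fun e he => ⟨hypId, hM, e, he, by simp only [hypId, hat_hypIdFun]⟩

lemma HMod_subset_ModS (hM : hypId ∈ M) (E : Set (Eqn I ar)) : HMod M E ⊆ ModS E := by
  rw [HMod_eq_ModS_chiE]
  exact ModS_anti (subset_chiE hM E)

lemma HId_subset_IdS (hM : hypId ∈ M) (K : Set (Alg I ar)) : HId M K ⊆ IdS K := by
  intro e he
  simpa only [hypId, hat_hypIdFun] using he hypId hM

lemma subset_chiA (hM : hypId ∈ M) (K : Set (Alg I ar)) : K ⊆ chiA M K :=
  fun A hA => ⟨hypId, hM, A, hA, (derive_hypIdFun A).symm⟩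

end HyperOperators

/-- Theorem 1.3, second part: for a submonoid `M` of
`Hyp(τ)` and an equational theory `Σ`, the four characterizations of being an
`M`-hyperequational theory are equivalent. -/
theorem mHyperequational_tfae
    (M : Set (Hyp I ar)) (hM : IsSubmonoid M)
    (E : Set (Eqn I ar)) (hE : IdS (ModS E) = E) :
    [E = HId M (HMod M E),
     chiE M E = E,
     ModS E = HMod M E,
     chiA M (ModS E) = ModS E].TFAE := by
  obtain ⟨hid, hcomp⟩ := hM
  tfae_have 1 → 2 := fun h => by
    refine Set.Subset.antisymm ?_ (subset_chiE hid E)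
    calc chiE M E = chiE M (HId M (HMod M E)) := congrArg _ h
      _ ⊆ HId M (HMod M E) := chiE_HId_subset hcomp _
      _ = E := h.symm
  tfae_have 2 → 3 := fun h => by rw [HMod_eq_ModS_chiE, h]
  tfae_have 3 → 1 := fun h => by
    refine Set.Subset.antisymm (subset_HId_HMod M E) ?_
    calc HId M (HMod M E) = HId M (ModS E) := by rw [h]
      _ ⊆ IdS (ModS E) := HId_subset_IdS hid _
      _ = E := hE
  tfae_have 3 → 4 := fun h =>
    Set.Subset.antisymm (chiA_subset_ModS_iff.2 h.subset) (subset_chiA hid _)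
  tfae_have 4 → 3 := fun h =>
    Set.Subset.antisymm (chiA_subset_ModS_iff.1 h.subset) (HMod_subset_ModS hid E)
  tfae_finish

end ColoredSolid
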